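/- arXiv:2002.11500 — 5 statements merged into one kernel-verified Lean document; each statement's English description precedes it below -/
import Mathlib

section
/- Let gC, gD, hC, hD, N0 be positive real constants. For α > 1 and PC, PD > 0, the combined rate function S(PC, PD) = log(1 + PC·gC/(N0 + PD·hD)) + log(1 + PD·gD/(N0 + PC·hC)) satisfies S(α·PC, α·PD) > S(PC, PD); i.e., scaling both transmit powers by a common factor greater than one strictly increases the sum-rate objective, so the optimum of the power allocation problem lies on the boundary of the power feasibility region. -/
lemma frac_lt (a b N0 α : ℝ) (ha : 0 < a) (hb : 0 < b) (hN0 : 0 < N0)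
    (hα : 1 < α) : a / (N0 + b) < α * a / (N0 + α * b) := by
  have hd1 : 0 < N0 + b := by linarith
  have hd2 : 0 < N0 + α * b := by nlinarith
  rw [div_lt_div_iff₀ hd1 hd2]
  nlinarith [mul_pos (mul_pos ha hN0) (sub_pos.mpr hα)]

/-- Scaling both transmit powers by a common factor `α > 1` strictly increases
the sum-rate objective
`S(PC, PD) = log(1 + PC·gC/(N0 + PD·hD)) + log(1 + PD·gD/(N0 + PC·hC))`,
hence the optimum of the power allocation problem lies on the boundary of the
power feasibility region. -/
theorem sum_rate_strict_increase_under_common_scaling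
    (gC gD hC hD N0 : ℝ) (hgC : 0 < gC) (hgD : 0 < gD) (hhC : 0 < hC)
    (hhD : 0 < hD) (hN0 : 0 < N0)
    (S : ℝ → ℝ → ℝ)
    (hS : ∀ PC PD, S PC PD =
      Real.log (1 + PC * gC / (N0 + PD * hD)) +
      Real.log (1 + PD * gD / (N0 + PC * hC)))
    (α PC PD : ℝ) (hα : 1 < α) (hPC : 0 < PC) (hPD : 0 < PD) :
    S PC PD < S (α * PC) (α * PD) := by
  rw [hS, hS]
  have h1 : PC * gC / (N0 + PD * hD) < α * PC * gC / (N0 + α * PD * hD) := by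
    have := frac_lt (PC * gC) (PD * hD) N0 α (by positivity) (by positivity) hN0 hα
    calc PC * gC / (N0 + PD * hD) < α * (PC * gC) / (N0 + α * (PD * hD)) := this
      _ = α * PC * gC / (N0 + α * PD * hD) := by ring_nf
  have h2 : PD * gD / (N0 + PC * hC) < α * PD * gD / (N0 + α * PC * hC) := by
    have := frac_lt (PD * gD) (PC * hC) N0 α (by positivity) (by positivity) hN0 hα
    calc PD * gD / (N0 + PC * hC) < α * (PD * gD) / (N0 + α * (PC * hC)) := this
      _ = α * PD * gD / (N0 + α * PC * hC) := by ring_nf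
  have p1 : (0:ℝ) < 1 + PC * gC / (N0 + PD * hD) := by positivity
  have p2 : (0:ℝ) < 1 + PD * gD / (N0 + PC * hC) := by positivity
  exact add_lt_add (Real.log_lt_log p1 (by linarith)) (Real.log_lt_log p2 (by linarith))
end

section
/- For every real A > 0 and B > 0, the function φ(z) = log(1+z) − z + (1+z)·A/(A+B) defined for z ≥ 0 attains its maximum at z* = A/B, with maximal value φ(A/B) = log(1 + A/B); that is, for all z ≥ 0, log(1+z) − z + (1+z)·A/(A+B) ≤ log(1 + A/B). -/
/-- For `A, B > 0`, the function `φ(z) = log(1+z) − z + (1+z)·A/(A+B)` on `z ≥ 0`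
attains its maximum at `z* = A/B`, with maximal value `log(1 + A/B)`. -/
theorem lagrangian_slack_maximizer
    (A B : ℝ) (hA : 0 < A) (hB : 0 < B) :
    (∀ z : ℝ, 0 ≤ z →
        Real.log (1 + z) - z + (1 + z) * A / (A + B) ≤ Real.log (1 + A / B)) ∧
      Real.log (1 + A / B) - A / B + (1 + A / B) * A / (A + B) =
        Real.log (1 + A / B) := by
  have hAB : 0 < A + B := by linarith
  have h1 : (0:ℝ) < 1 + A / B := by positivity
  constructor
  · intro z hz
    have hz1 : (0:ℝ) < 1 + z := by linarith
    have hkey : Real.log ((1 + z) / (1 + A / B)) ≤ (1 + z) / (1 + A / B) - 1 :=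
      Real.log_le_sub_one_of_pos (by positivity)
    rw [Real.log_div (ne_of_gt hz1) (ne_of_gt h1)] at hkey
    have heq : (1 + z) / (1 + A / B) - 1 = z - (1 + z) * A / (A + B) := by
      field_simp
      ring
    rw [heq] at hkey
    linarith
  · field_simp
    ring
end

section
/- Let gC, gD, hC, hD, N0 be positive real constants and define F2(pC, pD, z1, z2, y1, y2) = log(1+z1) + log(1+z2) − z1 + 2·y1·√((1+z1)·pC·gC) − y1²·(pC·gC + N0 + pD·hD) − z2 + 2·y2·√((1+z2)·pD·gD) − y2²·(pD·gD + N0 + pC·hC), where log is the natural logarithm and √ is the real square root. Fix pC > 0, pD > 0, and set z1* = pC·gC/(N0 + pD·hD), z2* = pD·gD/(N0 + pC·hC), y1* = √((1+z1*)·pC·gC)/(pC·gC + N0 + pD·hD), y2* = √((1+z2*)·pD·gD)/(pD·gD + N0 + pC·hC). Then F2(pC, pD, z1*, z2*, y1*, y2*) = log(1+z1*) + log(1+z2*); i.e., at the optimal auxiliary variables, the transformed objective F2 equals the original sum-rate objective F0(pC,pD) = log(1 + pC·gC/(N0 + pD·hD)) + log(1 + pD·gD/(N0 + pC·hC)). 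-/
/-- The quadratic-transformed objective `F2`. -/
noncomputable def F2 (gC gD hC hD N0 pC pD z1 z2 y1 y2 : ℝ) : ℝ :=
  Real.log (1 + z1) + Real.log (1 + z2)
    - z1 + 2 * y1 * Real.sqrt ((1 + z1) * pC * gC)
    - y1 ^ 2 * (pC * gC + N0 + pD * hD)
    - z2 + 2 * y2 * Real.sqrt ((1 + z2) * pD * gD)
    - y2 ^ 2 * (pD * gD + N0 + pC * hC)

lemma key_aux (A B : ℝ) (hA : 0 < A) (hB : 0 < B) :
    - (A / B) + 2 * (Real.sqrt ((1 + A / B) * A) / (A + B)) * Real.sqrt ((1 + A / B) * A)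
      - (Real.sqrt ((1 + A / B) * A) / (A + B)) ^ 2 * (A + B) = 0 := by
  have hS : (0:ℝ) ≤ (1 + A / B) * A := by positivity
  have hsq : Real.sqrt ((1 + A / B) * A) ^ 2 = (1 + A / B) * A := Real.sq_sqrt hS
  have hAB : A + B ≠ 0 := by positivity
  have hBne : B ≠ 0 := ne_of_gt hB
  set s := Real.sqrt ((1 + A / B) * A) with hs
  field_simp at hsq ⊢
  nlinarith [hsq]

/-- At the optimal auxiliary variables `z1*, z2*, y1*, y2*`, the transformed
objective `F2` equals the original sum-rate objective
`F0(pC,pD) = log(1 + pC·gC/(N0 + pD·hD)) + log(1 + pD·gD/(N0 + pC·hC))`. -/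
theorem F2_eq_F0_at_optimal_auxiliaries
    (gC gD hC hD N0 : ℝ) (hgC : 0 < gC) (hgD : 0 < gD) (hhC : 0 < hC)
    (hhD : 0 < hD) (hN0 : 0 < N0)
    (pC pD : ℝ) (hpC : 0 < pC) (hpD : 0 < pD)
    (z1s z2s y1s y2s : ℝ)
    (hz1 : z1s = pC * gC / (N0 + pD * hD))
    (hz2 : z2s = pD * gD / (N0 + pC * hC))
    (hy1 : y1s = Real.sqrt ((1 + z1s) * pC * gC) / (pC * gC + N0 + pD * hD))
    (hy2 : y2s = Real.sqrt ((1 + z2s) * pD * gD) / (pD * gD + N0 + pC * hC)) :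
    F2 gC gD hC hD N0 pC pD z1s z2s y1s y2s =
      Real.log (1 + z1s) + Real.log (1 + z2s) := by
  have h1 := key_aux (pC * gC) (N0 + pD * hD) (by positivity) (by positivity)
  have h2 := key_aux (pD * gD) (N0 + pC * hC) (by positivity) (by positivity)
  rw [F2, hz1, hz2, hy1, hy2, hz1, hz2]
  have e1 : (1 + pC * gC / (N0 + pD * hD)) * pC * gC
      = (1 + pC * gC / (N0 + pD * hD)) * (pC * gC) := by ring
  have e2 : (1 + pD * gD / (N0 + pC * hC)) * pD * gD
      = (1 + pD * gD / (N0 + pC * hC)) * (pD * gD) := by ring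
  have e3 : pC * gC + N0 + pD * hD = pC * gC + (N0 + pD * hD) := by ring
  have e4 : pD * gD + N0 + pC * hC = pD * gD + (N0 + pC * hC) := by ring
  rw [e1, e2, e3, e4]
  linarith [h1, h2]
end

section
/- Let gC, gD, hC, hD, N0 be positive real constants and define F2(pC, pD, z1, z2, y1, y2) = log(1+z1) + log(1+z2) − z1 + 2·y1·√((1+z1)·pC·gC) − y1²·(pC·gC + N0 + pD·hD) − z2 + 2·y2·√((1+z2)·pD·gD) − y2²·(pD·gD + N0 + pC·hC), where log is the natural logarithm and √ is the real square root. Fix z1 > 0, z2 > 0, y1 > 0, y2 ≥ 0, and pD ≥ 0. Then the function pC ↦ F2(pC, pD, z1, z2, y1, y2) attains its maximum over pC ∈ [0, ∞) at pC* = y1²·(1+z1)·gC / (y1²·gC + y2²·hC)². -/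
/-- Closed-form block maximizer in `pC`: for fixed `z1, z2, y1 > 0`, `y2 ≥ 0`,
`pD ≥ 0`, the function `pC ↦ F2(pC, pD, z1, z2, y1, y2)` attains its maximum
over `pC ∈ [0, ∞)` at `pC* = y1²·(1+z1)·gC / (y1²·gC + y2²·hC)²`. -/
theorem F2_block_maximizer_pC
    (gC gD hC hD N0 : ℝ) (hgC : 0 < gC) (hgD : 0 < gD) (hhC : 0 < hC)
    (hhD : 0 < hD) (hN0 : 0 < N0)
    (pD z1 z2 y1 y2 : ℝ) (hz1 : 0 < z1) (hz2 : 0 < z2) (hy1 : 0 < y1)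
    (hy2 : 0 ≤ y2) (hpD : 0 ≤ pD) :
    IsMaxOn (fun pC => F2 gC gD hC hD N0 pC pD z1 z2 y1 y2) (Set.Ici (0 : ℝ))
      (y1 ^ 2 * (1 + z1) * gC / (y1 ^ 2 * gC + y2 ^ 2 * hC) ^ 2) := by
  have hz1' : (0:ℝ) < 1 + z1 := by linarith
  set a : ℝ := y1 * Real.sqrt ((1 + z1) * gC) with ha
  set b : ℝ := y1 ^ 2 * gC + y2 ^ 2 * hC with hb
  have hbpos : 0 < b := by
    have : 0 ≤ y2 ^ 2 * hC := mul_nonneg (sq_nonneg _) hhC.le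
    have : 0 < y1 ^ 2 * gC := mul_pos (pow_pos hy1 2) hgC
    positivity
  have hapos : 0 < a := mul_pos hy1 (Real.sqrt_pos.mpr (mul_pos hz1' hgC))
  have ha2 : a ^ 2 = y1 ^ 2 * ((1 + z1) * gC) := by
    rw [ha, mul_pow, Real.sq_sqrt (mul_pos hz1' hgC).le]
  have hstar : y1 ^ 2 * (1 + z1) * gC / (y1 ^ 2 * gC + y2 ^ 2 * hC) ^ 2
      = a ^ 2 / b ^ 2 := by rw [ha2, ← hb]; ring
  -- key rewriting of F2 in terms of √p
  have hsqrt : ∀ p : ℝ, 0 ≤ p →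
      Real.sqrt ((1 + z1) * p * gC) = Real.sqrt ((1 + z1) * gC) * Real.sqrt p := by
    intro p hp
    rw [show (1 + z1) * p * gC = (1 + z1) * gC * p by ring,
      Real.sqrt_mul (mul_pos hz1' hgC).le]
  have hF : ∀ p : ℝ, 0 ≤ p →
      F2 gC gD hC hD N0 p pD z1 z2 y1 y2 =
        (Real.log (1 + z1) + Real.log (1 + z2) - z1
          - y1 ^ 2 * (N0 + pD * hD) - z2
          + 2 * y2 * Real.sqrt ((1 + z2) * pD * gD)
          - y2 ^ 2 * (pD * gD + N0))
        + (2 * a * Real.sqrt p - b * p) := by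
    intro p hp
    rw [F2, hsqrt p hp, ha, hb]; ring
  intro p hp
  simp only [Set.mem_Ici] at hp
  have hpstar : (0:ℝ) ≤ a ^ 2 / b ^ 2 := by positivity
  show F2 gC gD hC hD N0 p pD z1 z2 y1 y2 ≤
      F2 gC gD hC hD N0 (y1 ^ 2 * (1 + z1) * gC / (y1 ^ 2 * gC + y2 ^ 2 * hC) ^ 2)
        pD z1 z2 y1 y2
  rw [hstar, hF p hp, hF _ hpstar]
  have h1 : 2 * a * Real.sqrt p - b * p ≤ a ^ 2 / b := by
    have hsq : 0 ≤ (a - b * Real.sqrt p) ^ 2 := sq_nonneg _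
    have hps : Real.sqrt p ^ 2 = p := Real.sq_sqrt hp
    rw [le_div_iff₀ hbpos]
    nlinarith [hsq, hps]
  have h2 : Real.sqrt (a ^ 2 / b ^ 2) = a / b := by
    rw [← div_pow, Real.sqrt_sq (by positivity : (0:ℝ) ≤ a / b)]
  rw [h2]
  have h3 : 2 * a * (a / b) - b * (a ^ 2 / b ^ 2) = a ^ 2 / b := by
    field_simp; ring
  linarith [h1, h3.ge, h3.le]
end

section
/- Let N_D be a positive integer and let a_j ≥ 0 and b_j ≥ 0 for j = 1,…,N_D satisfy a_j·b_j = 0 for every j (each D2D pair uses only uplink or only downlink channels). Let m₀ᵘ > 0 and m₀ᵈ > 0 be reals and set m₀ = m₀ᵘ + m₀ᵈ. Then the joint unfairness metric satisfies the decomposition: (1/(m₀²·N_D))·Σ_{j=1}^{N_D} (a_j + b_j − m₀)² = (m₀ᵘ/m₀)²·δᵘ − (2/(m₀²·N_D))·Σ_{j=1}^{N_D} m₀ᵈ·a_j + (m₀ᵈ/m₀)²·δᵈ − (2/(m₀²·N_D))·Σ_{j=1}^{N_D} m₀ᵘ·b_j + 2·m₀ᵘ·m₀ᵈ/m₀²,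 where δᵘ = (1/((m₀ᵘ)²·N_D))·Σ_{j=1}^{N_D} (a_j − m₀ᵘ)² and δᵈ = (1/((m₀ᵈ)²·N_D))·Σ_{j=1}^{N_D} (b_j − m₀ᵈ)². -/
/-- Decomposition of the joint unfairness metric `δ_J` into the separate uplink
and downlink unfairness metrics `δᵘ, δᵈ`, cross terms, and a constant, under
the constraint `a_j·b_j = 0` (each D2D pair uses only uplink or only downlink
channels). -/
theorem joint_unfairness_decomposition
    (ND : ℕ) (hND : 0 < ND)
    (a b : Fin ND → ℝ) (ha : ∀ j, 0 ≤ a j) (hb : ∀ j, 0 ≤ b j)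
    (hab : ∀ j, a j * b j = 0)
    (m0u m0d m0 : ℝ) (hm0u : 0 < m0u) (hm0d : 0 < m0d)
    (hm0 : m0 = m0u + m0d)
    (δu δd : ℝ)
    (hδu : δu = (1 / (m0u ^ 2 * ND)) * ∑ j, (a j - m0u) ^ 2)
    (hδd : δd = (1 / (m0d ^ 2 * ND)) * ∑ j, (b j - m0d) ^ 2) :
    (1 / (m0 ^ 2 * ND)) * ∑ j, (a j + b j - m0) ^ 2 =
      (m0u / m0) ^ 2 * δu - (2 / (m0 ^ 2 * ND)) * ∑ j, m0d * a j
        + (m0d / m0) ^ 2 * δd - (2 / (m0 ^ 2 * ND)) * ∑ j, m0u * b j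
        + 2 * m0u * m0d / m0 ^ 2 := by
  have hNDR : (0:ℝ) < (ND:ℝ) := Nat.cast_pos.mpr hND
  have hm0pos : 0 < m0 := by rw [hm0]; positivity
  have key : ∑ j, (a j + b j - m0) ^ 2 =
      ∑ j, (a j - m0u) ^ 2 + ∑ j, (b j - m0d) ^ 2
        - 2 * ∑ j, m0d * a j - 2 * ∑ j, m0u * b j
        + (ND:ℝ) * (2 * m0u * m0d) := by
    have : ∑ j, (a j + b j - m0) ^ 2 =
        ∑ j, ((a j - m0u) ^ 2 + (b j - m0d) ^ 2
          - 2 * (m0d * a j) - 2 * (m0u * b j) + 2 * m0u * m0d) := by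
      refine Finset.sum_congr rfl fun j _ => ?_
      have := hab j
      rw [hm0]; nlinarith [this]
    rw [this]
    simp [Finset.sum_add_distrib, Finset.sum_sub_distrib, Finset.mul_sum,
      mul_comm]
  rw [hδu, hδd, key]
  field_simp
  ring
end
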